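/- arXiv:2407.05591 — 6 statements merged into one kernel-verified Lean document; each statement's English description precedes it below -/
import Mathlib

section
/- Let v ∈ ℝ^L have two entries equal to u and L−2 entries equal to w with u − w ≥ Δ > 0. Let s = softmax(c·v) and let s* ∈ ℝ^L have value 1/2 at the two top positions and 0 elsewhere. Then ‖s − s*‖₁ ≤ 2(L−2)e^{−cΔ} / (2 + (L−2)e^{−cΔ}). In particular, if c ≥ Δ^{-1} log(2(L−2)/ε) then ‖s − s*‖₁ ≤ ε. -/
set_option maxHeartbeats 1000000 in
/-- softmax concentration for a vector with two maximal entries. -/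
theorem stmt1 (L : ℕ) (hL : 3 ≤ L) (v : Fin L → ℝ) (u w Δ c ε : ℝ)
    (i j : Fin L) (hij : i ≠ j)
    (hvi : v i = u) (hvj : v j = u)
    (hother : ∀ k, k ≠ i → k ≠ j → v k = w)
    (hΔ : 0 < Δ) (hgap : Δ ≤ u - w) (hc : 0 < c) (hε : 0 < ε) :
    (∑ k, |Real.exp (c * v k) / (∑ l, Real.exp (c * v l))
        - (if k = i ∨ k = j then (1 : ℝ) / 2 else 0)|)
      ≤ 2 * ((L : ℝ) - 2) * Real.exp (-(c * Δ))
          / (2 + ((L : ℝ) - 2) * Real.exp (-(c * Δ)))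
    ∧ (Δ⁻¹ * Real.log (2 * ((L : ℝ) - 2) / ε) ≤ c →
        (∑ k, |Real.exp (c * v k) / (∑ l, Real.exp (c * v l))
          - (if k = i ∨ k = j then (1 : ℝ) / 2 else 0)|) ≤ ε) := by
  have hL3 : (3:ℝ) ≤ (L:ℝ) := by exact_mod_cast hL
  set N : ℝ := (L:ℝ) - 2 with hNdef
  have hN1 : (1:ℝ) ≤ N := by simp only [hNdef]; linarith
  have hN0 : (0:ℝ) < N := by linarith
  set A := Real.exp (c*u) with hAdef
  set B := Real.exp (c*w) with hBdef
  have hA0 : (0:ℝ) < A := Real.exp_pos _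
  have hB0 : (0:ℝ) < B := Real.exp_pos _
  set t := Real.exp (-(c*Δ)) with htdef
  have ht0 : (0:ℝ) < t := Real.exp_pos _
  have hcard : (((Finset.univ : Finset (Fin L)) \ {i, j}).card : ℝ) = N := by
    rw [Finset.card_sdiff_of_subset (Finset.subset_univ _), Finset.card_pair hij,
      Finset.card_univ, Fintype.card_fin, Nat.cast_sub (by omega)]
    simp [hNdef]
  have hmem : ∀ k : Fin L, k ∈ (Finset.univ : Finset (Fin L)) \ {i,j} → v k = w := by
    intro k hk
    simp only [Finset.mem_sdiff, Finset.mem_insert, Finset.mem_singleton] at hk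
    push_neg at hk
    exact hother k hk.2.1 hk.2.2
  have hsplit : ∀ g : Fin L → ℝ,
      (∑ k, g k) = g i + g j + ∑ k ∈ (Finset.univ : Finset (Fin L)) \ {i,j}, g k := by
    intro g
    rw [← Finset.sum_sdiff (Finset.subset_univ ({i,j} : Finset (Fin L))),
      Finset.sum_pair hij]
    ring
  have hS : (∑ l, Real.exp (c * v l)) = 2*A + N*B := by
    rw [hsplit]
    have h1 : ∑ k ∈ (Finset.univ : Finset (Fin L)) \ {i,j}, Real.exp (c * v k)
        = N * B := by
      rw [Finset.sum_congr rfl (fun k hk => by rw [hmem k hk]),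
        Finset.sum_const, nsmul_eq_mul, hcard]
    rw [h1, hvi, hvj]; ring
  set S := 2*A + N*B with hSdef
  have hS0 : (0:ℝ) < S := by rw [hSdef]; nlinarith
  have hSne : S ≠ 0 := ne_of_gt hS0
  have hAS : A / S ≤ 1/2 := by
    rw [div_le_iff₀ hS0, hSdef]; nlinarith
  have hTsum : (∑ k, |Real.exp (c * v k) / (∑ l, Real.exp (c * v l))
        - (if k = i ∨ k = j then (1 : ℝ) / 2 else 0)|) = 2*N*B/S := by
    simp only [hS]
    rw [hsplit]
    have hi' : |Real.exp (c * v i) / S - (if i = i ∨ i = j then (1:ℝ)/2 else 0)|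
        = 1/2 - A/S := by
      rw [if_pos (Or.inl rfl), hvi, ← hAdef, abs_of_nonpos (by linarith)]
      ring
    have hj' : |Real.exp (c * v j) / S - (if j = i ∨ j = j then (1:ℝ)/2 else 0)|
        = 1/2 - A/S := by
      rw [if_pos (Or.inr rfl), hvj, ← hAdef, abs_of_nonpos (by linarith)]
      ring
    have ho : ∑ k ∈ (Finset.univ : Finset (Fin L)) \ {i,j},
        |Real.exp (c * v k) / S - (if k = i ∨ k = j then (1:ℝ)/2 else 0)|
        = N * (B/S) := by
      rw [Finset.sum_congr rfl (fun k hk => ?_), Finset.sum_const, nsmul_eq_mul, hcard]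
      have hk' := hk
      simp only [Finset.mem_sdiff, Finset.mem_insert, Finset.mem_singleton] at hk'
      push_neg at hk'
      rw [if_neg (by tauto), hmem k hk, ← hBdef, sub_zero,
        abs_of_pos (by positivity)]
    rw [hi', hj', ho, hSdef]
    field_simp
    ring
  have hBA : B ≤ t * A := by
    rw [hBdef, htdef, hAdef, ← Real.exp_add]
    exact Real.exp_le_exp.2 (by nlinarith)
  have hmain : 2*N*B/S ≤ 2*N*t/(2+N*t) := by
    rw [div_le_div_iff₀ hS0 (by nlinarith), hSdef]
    nlinarith [mul_le_mul_of_nonneg_left hBA hN0.le]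
  constructor
  · rw [hTsum]; exact hmain
  · intro hc2
    rw [hTsum]
    have h1 : Real.log (2*N/ε) ≤ c * Δ := by
      have h := mul_le_mul_of_nonneg_right hc2 hΔ.le
      calc Real.log (2*N/ε) = Δ⁻¹ * Real.log (2*N/ε) * Δ := by
            field_simp
        _ ≤ c * Δ := h
    have ht2 : t ≤ ε/(2*N) := by
      rw [htdef, show ε/(2*N) = Real.exp (Real.log (ε/(2*N))) from
        (Real.exp_log (by positivity)).symm]
      apply Real.exp_le_exp.2
      have hlog : Real.log (ε/(2*N)) = - Real.log (2*N/ε) := by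
        rw [← Real.log_inv, inv_div]
      rw [hlog]; linarith
    have h2Nt : 2*N*t ≤ ε := by
      calc 2*N*t ≤ 2*N*(ε/(2*N)) :=
            mul_le_mul_of_nonneg_left ht2 (by linarith)
        _ = ε := by field_simp
    calc 2*N*B/S ≤ 2*N*t/(2+N*t) := hmain
      _ ≤ ε := by
        have hd : (0:ℝ) < 2 + N*t := by linarith [mul_pos hN0 ht0]
        rw [div_le_iff₀ hd]
        nlinarith [mul_pos hε (mul_pos hN0 ht0)]
end

section
/- Let v ∈ ℝ^L have one entry equal to u and L−1 entries each at most u − Δ for some Δ > 0. Let s = softmax(c·v) and let e be the indicator vector of the maximal entry. Then ‖s − e‖₁ ≤ 2(L−1)e^{−cΔ}/(1 + (L−1)e^{−cΔ}), and hence ‖s − e‖₁ ≤ ε whenever c ≥ Δ^{-1} log(2(L−1)/ε). -/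
/-- softmax concentration for a vector with a unique maximal entry. -/
theorem stmt2 (L : ℕ) (v : Fin L → ℝ) (u Δ c ε : ℝ) (k0 : Fin L)
    (hvk : v k0 = u) (hother : ∀ k, k ≠ k0 → v k ≤ u - Δ)
    (hΔ : 0 < Δ) (hc : 0 < c) (hε : 0 < ε) :
    (∑ k, |Real.exp (c * v k) / (∑ l, Real.exp (c * v l))
        - (if k = k0 then (1 : ℝ) else 0)|)
      ≤ 2 * ((L : ℝ) - 1) * Real.exp (-(c * Δ))
          / (1 + ((L : ℝ) - 1) * Real.exp (-(c * Δ)))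
    ∧ (Δ⁻¹ * Real.log (2 * ((L : ℝ) - 1) / ε) ≤ c →
        (∑ k, |Real.exp (c * v k) / (∑ l, Real.exp (c * v l))
          - (if k = k0 then (1 : ℝ) else 0)|) ≤ ε) := by
  have hL : 1 ≤ L := k0.pos
  set S := ∑ l, Real.exp (c * v l) with hSdef
  set T := ∑ k ∈ Finset.univ.erase k0, Real.exp (c * v k) with hTdef
  have hST : S = Real.exp (c * u) + T := by
    rw [hSdef, ← Finset.add_sum_erase _ _ (Finset.mem_univ k0), hvk]
  have hTnn : 0 ≤ T := Finset.sum_nonneg fun _ _ => (Real.exp_pos _).le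
  have hSpos : 0 < S := by rw [hST]; positivity
  have hTle : T ≤ ((L : ℝ) - 1) * Real.exp (c * (u - Δ)) := by
    calc T ≤ ∑ k ∈ Finset.univ.erase k0, Real.exp (c * (u - Δ)) :=
        Finset.sum_le_sum fun k hk => Real.exp_le_exp.2 (by
          have := hother k (Finset.ne_of_mem_erase hk); nlinarith)
      _ = ((L : ℝ) - 1) * Real.exp (c * (u - Δ)) := by
        rw [Finset.sum_const, Finset.card_erase_of_mem (Finset.mem_univ _),
          Finset.card_univ, Fintype.card_fin, nsmul_eq_mul, Nat.cast_sub hL,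
          Nat.cast_one]
  set E := Real.exp (-(c * Δ)) with hEdef
  have hEpos : 0 < E := Real.exp_pos _
  set B := ((L : ℝ) - 1) * E with hBdef
  have hBnn : 0 ≤ B := by
    have : (0:ℝ) ≤ (L : ℝ) - 1 := by
      have : (1:ℝ) ≤ (L:ℝ) := by exact_mod_cast hL
      linarith
    positivity
  -- the sum equals 2 * T / S
  have hsum : (∑ k, |Real.exp (c * v k) / S - (if k = k0 then (1 : ℝ) else 0)|)
      = 2 * T / S := by
    rw [← Finset.add_sum_erase _ _ (Finset.mem_univ k0)]
    have h1 : |Real.exp (c * v k0) / S - (if k0 = k0 then (1:ℝ) else 0)| = T / S := by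
      rw [if_pos rfl, hvk, abs_of_nonpos, neg_sub]
      · field_simp
        rw [hST]; ring
      · have : Real.exp (c * u) ≤ S := by rw [hST]; linarith
        have := div_le_one_of_le₀ this hSpos.le
        linarith
    rw [h1]
    have h2 : ∀ k ∈ Finset.univ.erase k0,
        |Real.exp (c * v k) / S - (if k = k0 then (1:ℝ) else 0)|
          = Real.exp (c * v k) / S := by
      intro k hk
      rw [if_neg (Finset.ne_of_mem_erase hk), sub_zero, abs_of_nonneg]
      positivity
    rw [Finset.sum_congr rfl h2, ← Finset.sum_div, ← hTdef]
    ring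
  -- key bound : 2T/S ≤ 2B/(1+B)
  have hmain : 2 * T / S ≤ 2 * B / (1 + B) := by
    have hSB : S * (1 + B) > 0 := by positivity
    rw [div_le_div_iff₀ hSpos (by positivity)]
    have hTB : T ≤ B * Real.exp (c * u) := by
      have : E * Real.exp (c * u) = Real.exp (c * (u - Δ)) := by
        rw [← Real.exp_add]; ring_nf
      calc T ≤ ((L : ℝ) - 1) * Real.exp (c * (u - Δ)) := hTle
        _ = B * Real.exp (c * u) := by rw [hBdef, ← this]; ring
    have hexp : 0 < Real.exp (c * u) := Real.exp_pos _
    rw [hST]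
    nlinarith [mul_nonneg hTnn hTnn, mul_nonneg hBnn hTnn]
  constructor
  · rw [hsum]
    calc 2 * T / S ≤ 2 * B / (1 + B) := hmain
      _ = 2 * ((L : ℝ) - 1) * E / (1 + ((L : ℝ) - 1) * E) := by rw [hBdef]; ring_nf
  · intro hcε
    rw [hsum]
    have hstep : 2 * B / (1 + B) ≤ 2 * B := by
      rw [div_le_iff₀ (by positivity)]
      nlinarith
    have h2B : 2 * B ≤ ε := by
      rcases eq_or_lt_of_le hL with h1 | h2
      · have : ((L:ℝ) - 1) = 0 := by
          have : (L:ℝ) = 1 := by exact_mod_cast h1.symm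
          linarith
        rw [hBdef, this]; nlinarith
      · have hLpos : (0:ℝ) < 2 * ((L:ℝ) - 1) := by
          have : (2:ℝ) ≤ (L:ℝ) := by exact_mod_cast h2
          linarith
        have harg : 0 < 2 * ((L:ℝ) - 1) / ε := by positivity
        have hlog : Real.log (2 * ((L:ℝ) - 1) / ε) ≤ c * Δ := by
          have := mul_le_mul_of_nonneg_right hcε hΔ.le
          rw [inv_mul_eq_div, div_mul_eq_mul_div, mul_div_assoc,
            div_self hΔ.ne', mul_one] at this
          linarith
        have : 2 * ((L:ℝ) - 1) / ε ≤ Real.exp (c * Δ) :=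
          (Real.log_le_iff_le_exp harg).mp hlog
        have hE' : 2 * ((L:ℝ) - 1) * E ≤ ε := by
          rw [hEdef, Real.exp_neg]
          rw [div_le_iff₀ hε] at this
          rw [mul_inv_le_iff₀ (Real.exp_pos _)]
          linarith
        rw [hBdef]; linarith
    linarith [hmain]
end

section
/- Let B = {b_0,...,b_{K−1}} ⊂ ℝ^d be linearly independent unit vectors with Gram–Schmidt diagonal lower bound δ = min_j |b_jᵀ u_j| > 0. Suppose f = Σ_j m_j b_j with m_j ∈ ℝ, and suppose ‖b_0 − f‖₂ ≤ ε. Then for every j ≥ 1, |m_j| ≤ ε (1 + 1/δ)^{K−j−1} / δ, and |1 − m_0| ≤ ε (1 + 1/δ)^{K−1}. -/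
open scoped RealInnerProductSpace

/-- Gram–Schmidt orthonormalization of a family indexed by `Fin K`. -/
noncomputable def gramSchmidtNormedFin (K d : ℕ)
    (b : Fin K → EuclideanSpace ℝ (Fin d)) : Fin K → EuclideanSpace ℝ (Fin d) :=
  @InnerProductSpace.gramSchmidtNormed ℝ _ _ _ _ (Fin K) Fin.instLinearOrder inferInstance
    (inferInstanceAs (WellFoundedLT (Fin K))) b

/-! Let `c = m - e₀` be the coefficients of `f - b₀`, so `‖∑ c_l b_l‖ ≤ ε`. Pairing this vector
with `u_j`, which is orthogonal to every `b_l` with `l < j`, and using `|⟪u_j, b_l⟫| ≤ 1` gives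
`δ |c_j| ≤ ε + ∑_{l > j} |c_l|`. A backward induction on `j` turns this into
`ε + ∑_{l ≥ j} |c_l| ≤ ε (1 + 1/δ)^(K - j)`. For `j = 0` the sharper bound comes from
`u₀ = b₀`, so that `⟪u₀, b₀⟫ = 1`. -/

open Finset

namespace InnerProductSpace

variable {𝕜 E ι : Type*} [RCLike 𝕜] [NormedAddCommGroup E] [InnerProductSpace 𝕜 E]
  [LinearOrder ι] [LocallyFiniteOrderBot ι] [WellFoundedLT ι]

theorem gramSchmidt_of_isMin (f : ι → E) {n : ι} (hn : IsMin n) :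
    gramSchmidt 𝕜 f n = f n := by
  rw [gramSchmidt_def, Iio_eq_empty.mpr hn, sum_empty, sub_zero]

theorem gramSchmidtNormed_of_isMin {f : ι → E} {n : ι} (hn : IsMin n) (hfn : ‖f n‖ = 1) :
    gramSchmidtNormed 𝕜 f n = f n := by
  simp [gramSchmidtNormed, gramSchmidt_of_isMin f hn, hfn]

theorem norm_gramSchmidtNormed_le_one (f : ι → E) (n : ι) :
    ‖gramSchmidtNormed 𝕜 f n‖ ≤ 1 := by
  by_cases h : gramSchmidtNormed 𝕜 f n = 0
  · simp [h]
  · exact (gramSchmidtNormed_unit_length' h).le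

theorem gramSchmidtNormed_inv_triangular (f : ι → E) {i j : ι} (hij : i < j) :
    inner 𝕜 (gramSchmidtNormed 𝕜 f j) (f i) = 0 := by
  rw [gramSchmidtNormed, inner_smul_left, gramSchmidt_inv_triangular 𝕜 f hij, mul_zero]

end InnerProductSpace

theorem abs_mul_inner_le_norm_sum_add_sum_Ioi {ι E : Type*} [Fintype ι] [LinearOrder ι]
    [LocallyFiniteOrderTop ι] [NormedAddCommGroup E] [InnerProductSpace ℝ E] {b u : ι → E}
    (hb : ∀ l, ‖b l‖ ≤ 1) (hu : ∀ j, ‖u j‖ ≤ 1) (htri : ∀ ⦃l j : ι⦄, l < j → ⟪u j, b l⟫ = 0)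
    (c : ι → ℝ) (j : ι) :
    |c j * ⟪u j, b j⟫| ≤ ‖∑ l, c l • b l‖ + ∑ l ∈ Ioi j, |c l| := by
  have hexpand : ⟪u j, ∑ l, c l • b l⟫ = c j * ⟪u j, b j⟫ + ∑ l ∈ Ioi j, c l * ⟪u j, b l⟫ := by
    simp only [inner_sum, real_inner_smul_right]
    rw [← sum_subset (subset_univ (Ici j)), Ici_eq_cons_Ioi, sum_cons]
    intro l _ hl
    rw [htri (not_le.mp (mt mem_Ici.mpr hl)), mul_zero]
  have hhead : |⟪u j, ∑ l, c l • b l⟫| ≤ ‖∑ l, c l • b l‖ :=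
    (abs_real_inner_le_norm _ _).trans (mul_le_of_le_one_left (norm_nonneg _) (hu j))
  have htail : |∑ l ∈ Ioi j, c l * ⟪u j, b l⟫| ≤ ∑ l ∈ Ioi j, |c l| := by
    refine (abs_sum_le_sum_abs _ _).trans (sum_le_sum fun l _ => ?_)
    rw [abs_mul]
    refine mul_le_of_le_one_right (abs_nonneg _) ((abs_real_inner_le_norm _ _).trans ?_)
    exact mul_le_one₀ (hu j) (norm_nonneg _) (hb l)
  calc |c j * ⟪u j, b j⟫|
      = |⟪u j, ∑ l, c l • b l⟫ - ∑ l ∈ Ioi j, c l * ⟪u j, b l⟫| := by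
        rw [hexpand, add_sub_cancel_right]
    _ ≤ |⟪u j, ∑ l, c l • b l⟫| + |∑ l ∈ Ioi j, c l * ⟪u j, b l⟫| := abs_sub _ _
    _ ≤ ‖∑ l, c l • b l‖ + ∑ l ∈ Ioi j, |c l| := add_le_add hhead htail

theorem add_sum_Ico_le_mul_pow {x : ℕ → ℝ} {n : ℕ} {δ ε : ℝ} (hδ : 0 < δ)
    (hx : ∀ t < n, δ * x t ≤ ε + ∑ l ∈ Ico (t + 1) n, x l) {t : ℕ} (ht : t ≤ n) :
    ε + ∑ l ∈ Ico t n, x l ≤ ε * (1 + 1 / δ) ^ (n - t) := by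
  induction ht using Nat.decreasingInduction with
  | self => simp
  | of_succ k hk ih =>
    set S := ∑ l ∈ Ico (k + 1) n, x l
    have hxk : x k ≤ (ε + S) / δ := by
      rw [le_div_iff₀ hδ, mul_comm]
      exact hx k hk
    rw [sum_eq_sum_Ico_succ_bot hk, show n - k = n - (k + 1) + 1 by omega, pow_succ, ← mul_assoc]
    calc ε + (x k + S) ≤ (ε + S) * (1 + 1 / δ) := by
          rw [mul_one_add, mul_one_div]
          linarith
      _ ≤ ε * (1 + 1 / δ) ^ (n - (k + 1)) * (1 + 1 / δ) := by gcongr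

theorem Fin.sum_Ioi_eq_sum_Ico_dite {M : Type*} [AddCommMonoid M] {n : ℕ} (f : Fin n → M)
    (j : Fin n) :
    ∑ l ∈ Ioi j, f l = ∑ t ∈ Ico (j + 1 : ℕ) n, if h : t < n then f ⟨t, h⟩ else 0 := by
  rw [Finset.Ico_add_one_left_eq_Ioo, ← Fin.map_valEmbedding_Ioi, sum_map]
  exact sum_congr rfl fun l _ => by simp

theorem stmt5_general (K d : ℕ) (hK : 0 < K)
    (b : Fin K → EuclideanSpace ℝ (Fin d))
    (hunit : ∀ j, ‖b j‖ = 1)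
    (δ ε : ℝ)
    (hδ : δ = Finset.univ.inf' ⟨⟨0, hK⟩, Finset.mem_univ _⟩
        (fun j => |(⟪b j, gramSchmidtNormedFin K d b j⟫ : ℝ)|))
    (hδpos : 0 < δ)
    (m : Fin K → ℝ) (hf : ‖b ⟨0, hK⟩ - ∑ j, m j • b j‖ ≤ ε) :
    (∀ j : Fin K, 1 ≤ j.val →
        |m j| ≤ ε * (1 + 1 / δ) ^ (K - j.val - 1) / δ) ∧
    |1 - m ⟨0, hK⟩| ≤ ε * (1 + 1 / δ) ^ (K - 1) := by
  set u := gramSchmidtNormedFin K d b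
  set z : Fin K := ⟨0, hK⟩
  set c : Fin K → ℝ := m - Pi.single z 1
  set x : ℕ → ℝ := fun t => if h : t < K then |c ⟨t, h⟩| else 0
  have hcx (j : Fin K) : x j = |c j| := dif_pos j.isLt
  have hc : ‖∑ l, c l • b l‖ ≤ ε := by
    have hsum : ∑ l, c l • b l = -(b z - ∑ l, m l • b l) := by
      simp [c, sub_smul, sum_sub_distrib]
    rwa [hsum, norm_neg]
  have hrow (j : Fin K) : |c j * ⟪u j, b j⟫| ≤ ε + ∑ l ∈ Ico (j + 1 : ℕ) K, x l := by
    rw [show ∑ l ∈ Ico (j + 1 : ℕ) K, x l = ∑ l ∈ Ioi j, |c l| from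
      (Fin.sum_Ioi_eq_sum_Ico_dite (fun l => |c l|) j).symm]
    exact (abs_mul_inner_le_norm_sum_add_sum_Ioi (fun l => (hunit l).le)
      (InnerProductSpace.norm_gramSchmidtNormed_le_one b)
      (fun _ _ => InnerProductSpace.gramSchmidtNormed_inv_triangular b) c j).trans
        (add_le_add_left hc _)
  have hx (t : ℕ) (ht : t < K) : δ * x t ≤ ε + ∑ l ∈ Ico (t + 1) K, x l := by
    have hdiag : δ ≤ |⟪u ⟨t, ht⟩, b ⟨t, ht⟩⟫| := by
      rw [real_inner_comm, hδ]
      exact inf'_le _ (mem_univ _)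
    refine le_trans ?_ (hrow ⟨t, ht⟩)
    rw [abs_mul, mul_comm, show x t = |c ⟨t, ht⟩| from hcx ⟨t, ht⟩]
    gcongr
  have hu0 : ⟪u z, b z⟫ = 1 := by
    have hz : IsMin z := fun y _ => Nat.zero_le y.val
    change ⟪InnerProductSpace.gramSchmidtNormed ℝ b z, b z⟫ = 1
    rw [InnerProductSpace.gramSchmidtNormed_of_isMin hz (hunit z), real_inner_self_eq_norm_sq,
      hunit, one_pow]
  constructor
  · intro j hj
    have hjz : j ≠ z := fun h => by simp [h, z] at hj
    have hcj : c j = m j := by simp [c, Pi.single_eq_of_ne hjz]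
    rw [le_div_iff₀ hδpos, Nat.sub_sub, mul_comm, ← hcj, ← hcx]
    exact (hx j j.isLt).trans (add_sum_Ico_le_mul_pow hδpos hx j.isLt)
  · calc |1 - m z| = |c z * ⟪u z, b z⟫| := by simp [c, hu0, abs_sub_comm]
      _ ≤ ε + ∑ l ∈ Ico 1 K, x l := hrow z
      _ ≤ ε * (1 + 1 / δ) ^ (K - 1) := add_sum_Ico_le_mul_pow hδpos hx hK

/-- coefficient bounds from a Gram–Schmidt diagonal lower bound. -/
theorem stmt5 (K d : ℕ) (hK : 0 < K)
    (b : Fin K → EuclideanSpace ℝ (Fin d))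
    (hli : LinearIndependent ℝ b) (hunit : ∀ j, ‖b j‖ = 1)
    (δ ε : ℝ)
    (hδ : δ = Finset.univ.inf' ⟨⟨0, hK⟩, Finset.mem_univ _⟩
        (fun j => |(⟪b j, gramSchmidtNormedFin K d b j⟫ : ℝ)|))
    (hδpos : 0 < δ)
    (m : Fin K → ℝ) (hf : ‖b ⟨0, hK⟩ - ∑ j, m j • b j‖ ≤ ε) :
    (∀ j : Fin K, 1 ≤ j.val →
        |m j| ≤ ε * (1 + 1 / δ) ^ (K - j.val - 1) / δ) ∧
    |1 - m ⟨0, hK⟩| ≤ ε * (1 + 1 / δ) ^ (K - 1) :=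
  stmt5_general K d hK b hunit δ ε hδ hδpos m hf
end

section
/- Let {b_0,...,b_{K−1}} ⊂ ℝ^d be unit vectors with pairwise inner products at most 1 − Δ for some Δ > 0. Suppose f = Σ_j m_j b_j with all m_j ≥ 0 and Σ_j m_j ≤ 1, and ‖b_0 − f‖₂ ≤ ε. Then m_j ≤ ε/Δ for every j ≠ 0, and |1 − m_0| ≤ ε + 2K·ε/Δ. -/
/-!
Pairing `b₀ - f` with the unit vector `b₀` gives
`⟪b₀, b₀ - f⟫ = ∑ⱼ mⱼ (1 - ⟪b₀, bⱼ⟫) + (1 - ∑ⱼ mⱼ)`, a sum of nonnegative terms bounded by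
`‖b₀ - f‖ ≤ ε`; for `j ≠ 0` the term `mⱼ (1 - ⟪b₀, bⱼ⟫)` is at least `Δ mⱼ`, so `mⱼ ≤ ε / Δ`.
For `m₀`, write `(1 - m₀) • b₀ = (b₀ - f) + ∑_{j ≠ 0} mⱼ • bⱼ` and take norms.
-/

open scoped RealInnerProductSpace
open Finset

section Incoherent

variable {ι E : Type*} [Fintype ι] [NormedAddCommGroup E] [InnerProductSpace ℝ E]
  {b : ι → E} {i₀ : ι} {m : ι → ℝ}

lemma inner_unit_sub_sum_smul (hb₀ : ‖b i₀‖ = 1) :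
    ⟪b i₀, b i₀ - ∑ j, m j • b j⟫ = ∑ j, m j * (1 - ⟪b i₀, b j⟫) + (1 - ∑ j, m j) := by
  simp only [inner_sub_right, inner_sum, real_inner_smul_right, real_inner_self_eq_norm_sq, hb₀,
    mul_sub, sum_sub_distrib, mul_one]
  ring

lemma sum_mul_one_sub_inner_le_norm (hb₀ : ‖b i₀‖ = 1) (hsum : ∑ j, m j ≤ 1) :
    ∑ j, m j * (1 - ⟪b i₀, b j⟫) ≤ ‖b i₀ - ∑ j, m j • b j‖ :=
  calc ∑ j, m j * (1 - ⟪b i₀, b j⟫)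
      ≤ ∑ j, m j * (1 - ⟪b i₀, b j⟫) + (1 - ∑ j, m j) := by linarith
    _ = ⟪b i₀, b i₀ - ∑ j, m j • b j⟫ := (inner_unit_sub_sum_smul hb₀).symm
    _ ≤ ‖b i₀‖ * ‖b i₀ - ∑ j, m j • b j‖ := real_inner_le_norm _ _
    _ = ‖b i₀ - ∑ j, m j • b j‖ := by rw [hb₀, one_mul]

lemma coeff_le_norm_sub_div_of_inner_le {Δ : ℝ} (hΔ : 0 < Δ) (hb₀ : ‖b i₀‖ = 1)
    (hb : ∀ j, ‖b j‖ ≤ 1) (hm : ∀ j, 0 ≤ m j) (hsum : ∑ j, m j ≤ 1) {j : ι}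
    (hj : ⟪b i₀, b j⟫ ≤ 1 - Δ) :
    m j ≤ ‖b i₀ - ∑ k, m k • b k‖ / Δ := by
  have hterm : ∀ k, 0 ≤ m k * (1 - ⟪b i₀, b k⟫) := fun k ↦ by
    have hinner : ⟪b i₀, b k⟫ ≤ ‖b i₀‖ * ‖b k‖ := real_inner_le_norm _ _
    rw [hb₀, one_mul] at hinner
    exact mul_nonneg (hm k) (by linarith [hb k])
  rw [le_div_iff₀ hΔ]
  calc m j * Δ ≤ m j * (1 - ⟪b i₀, b j⟫) := mul_le_mul_of_nonneg_left (by linarith) (hm j)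
    _ ≤ ∑ k, m k * (1 - ⟪b i₀, b k⟫) := single_le_sum (fun k _ ↦ hterm k) (mem_univ j)
    _ ≤ ‖b i₀ - ∑ k, m k • b k‖ := sum_mul_one_sub_inner_le_norm hb₀ hsum

variable [DecidableEq ι]

lemma abs_one_sub_coeff_le (hb₀ : ‖b i₀‖ = 1) (hb : ∀ j, ‖b j‖ ≤ 1) (hm : ∀ j, 0 ≤ m j) :
    |1 - m i₀| ≤ ‖b i₀ - ∑ j, m j • b j‖ + ∑ j ∈ univ.erase i₀, m j := by
  have hdecomp :
      (1 - m i₀) • b i₀ = (b i₀ - ∑ j, m j • b j) + ∑ j ∈ univ.erase i₀, m j • b j := by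
    rw [← add_sum_erase _ _ (mem_univ i₀), sub_smul, one_smul]
    abel
  have hrest : ‖∑ j ∈ univ.erase i₀, m j • b j‖ ≤ ∑ j ∈ univ.erase i₀, m j :=
    (norm_sum_le _ _).trans <| sum_le_sum fun j _ ↦ by
      rw [norm_smul, Real.norm_of_nonneg (hm j)]
      exact mul_le_of_le_one_right (hm j) (hb j)
  calc |1 - m i₀| = ‖(1 - m i₀) • b i₀‖ := by rw [norm_smul, hb₀, mul_one, Real.norm_eq_abs]
    _ ≤ ‖b i₀ - ∑ j, m j • b j‖ + ‖∑ j ∈ univ.erase i₀, m j • b j‖ :=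
        hdecomp ▸ norm_add_le _ _
    _ ≤ _ := by gcongr

end Incoherent

/-- coefficient bounds from incoherence of unit vectors. -/
theorem stmt6 (K d : ℕ) (hK : 0 < K) (Δ ε : ℝ) (hΔ : 0 < Δ)
    (b : Fin K → EuclideanSpace ℝ (Fin d)) (hunit : ∀ j, ‖b j‖ = 1)
    (hcorr : ∀ i j, i ≠ j → (⟪b i, b j⟫ : ℝ) ≤ 1 - Δ)
    (m : Fin K → ℝ) (hm : ∀ j, 0 ≤ m j) (hsum : ∑ j, m j ≤ 1)
    (hf : ‖b ⟨0, hK⟩ - ∑ j, m j • b j‖ ≤ ε) :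
    (∀ j, j ≠ ⟨0, hK⟩ → m j ≤ ε / Δ) ∧
    |1 - m ⟨0, hK⟩| ≤ ε + 2 * K * (ε / Δ) := by
  set i₀ : Fin K := ⟨0, hK⟩
  have hb : ∀ j, ‖b j‖ ≤ 1 := fun j ↦ (hunit j).le
  have hcoeff : ∀ j, j ≠ i₀ → m j ≤ ε / Δ := fun j hj ↦
    (coeff_le_norm_sub_div_of_inner_le hΔ (hunit i₀) hb hm hsum (hcorr i₀ j hj.symm)).trans
      (div_le_div_of_nonneg_right hf hΔ.le)
  have hεΔ : 0 ≤ ε / Δ := div_nonneg ((norm_nonneg _).trans hf) hΔ.le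
  have hrest : ∑ j ∈ univ.erase i₀, m j ≤ K * (ε / Δ) :=
    calc ∑ j ∈ univ.erase i₀, m j ≤ #(univ.erase i₀) • (ε / Δ) :=
          sum_le_card_nsmul _ _ _ fun j hj ↦ hcoeff j (ne_of_mem_erase hj)
      _ ≤ #(univ : Finset (Fin K)) • (ε / Δ) := nsmul_le_nsmul_left hεΔ card_erase_le
      _ = K * (ε / Δ) := by rw [card_univ, Fintype.card_fin, nsmul_eq_mul]
  refine ⟨hcoeff, ?_⟩
  have hK' : (0 : ℝ) ≤ K * (ε / Δ) := mul_nonneg K.cast_nonneg hεΔ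
  linarith [abs_one_sub_coeff_le (hunit i₀) hb hm]
end

section
/- Fix a unit vector x ∈ ℝ^d and let z_1,...,z_m be independent random vectors in ℝ^d where z_i ~ N(0, (σ²B/d) I_d) for i ≠ β and z_β ~ N(x, (σ²(B−1)/d) I_d). If d ≥ 2σ²B(√(log m) + t)², then with probability at least 1 − 3e^{−t²/4}, z_βᵀx > max_{i≠β} z_iᵀx. -/
/-!
Each block projects onto `x` as a one-dimensional Gaussian of variance at most `1 / (2 s²)`,
where `s = √(log m) + t`, so the Chernoff bound for sub-Gaussian variables gives
`P(deviation ≥ ε) ≤ exp (-(s ε)²)`. Split at the threshold `θ = (√(log m) + t / 2) / s`: a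
non-query block (mean `0`) exceeds `θ` with probability at most
`exp (-(√(log m) + t / 2)²) ≤ e^{-t²/4} / m`, the query block (mean `‖x‖² = 1`) falls below `θ`
with probability at most `exp (-(t / 2)²)`, and a union bound over the blocks leaves a failure
probability of at most `2 e^{-t²/4}`.
-/

open MeasureTheory ProbabilityTheory Real

open scoped NNReal ENNReal

lemma hasSubgaussianMGF_sub_gaussianReal (μ : ℝ) {v c : ℝ≥0} (hvc : v ≤ c) :
    HasSubgaussianMGF (fun y ↦ y - μ) c (gaussianReal μ v) := by
  have hmap : (gaussianReal μ v).map (fun y ↦ y - μ) = gaussianReal 0 v := by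
    rw [gaussianReal_map_sub_const, sub_self]
  refine ⟨fun t ↦ ?_, fun t ↦ ?_⟩
  · rw [← mgf_pos_iff, mgf_gaussianReal hmap]
    exact exp_pos _
  · rw [mgf_gaussianReal hmap, zero_mul, zero_add]
    gcongr

lemma measureReal_pi_gaussianReal_sum_ge_le {ι : Type*} [Fintype ι] (mean a : ι → ℝ)
    {v c : ℝ≥0} (hvc : v ≤ c) {ε : ℝ} (hε : 0 ≤ ε) :
    (Measure.pi fun j ↦ gaussianReal (mean j) v).real {w | ε ≤ ∑ j, a j * (w j - mean j)}
      ≤ exp (-ε ^ 2 / (2 * ((∑ j, a j ^ 2) * c))) := by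
  set P := Measure.pi fun j ↦ gaussianReal (mean j) v
  have hindep : iIndepFun (fun j (w : ι → ℝ) ↦ a j * (w j - mean j)) P :=
    iIndepFun_pi (X := fun j y ↦ a j * (y - mean j)) fun j ↦ by fun_prop
  have hsubG : ∀ j ∈ (Finset.univ : Finset ι), HasSubgaussianMGF
      (fun w : ι → ℝ ↦ a j * (w j - mean j)) (⟨a j ^ 2, sq_nonneg _⟩ * c) P := by
    intro j _
    have hj := measurePreserving_eval (fun j ↦ gaussianReal (mean j) v) j
    have h := hasSubgaussianMGF_sub_gaussianReal (mean j) hvc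
    rw [← hj.map_eq] at h
    exact (h.of_map hj.measurable.aemeasurable).const_mul (a j)
  convert HasSubgaussianMGF.measure_sum_ge_le_of_iIndepFun hindep hsubG hε using 4
  push_cast
  rw [Finset.sum_mul]
  rfl

lemma measureReal_pi_gaussianReal_sum_ge_le_exp_neg_sq {ι : Type*} [Fintype ι]
    (mean a : ι → ℝ) (ha : ∑ j, a j ^ 2 = 1) {v : ℝ≥0} {s : ℝ} (hs : 0 < s)
    (hv : 2 * v * s ^ 2 ≤ 1) {ε : ℝ} (hε : 0 ≤ ε) :
    (Measure.pi fun j ↦ gaussianReal (mean j) v).real {w | ε ≤ ∑ j, a j * (w j - mean j)}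
      ≤ exp (-(s * ε) ^ 2) := by
  set c : ℝ≥0 := ⟨(2 * s ^ 2)⁻¹, by positivity⟩
  have hvc : v ≤ c := by
    change (v : ℝ) ≤ (2 * s ^ 2)⁻¹
    rw [← one_div, le_div_iff₀ (by positivity)]
    linarith
  convert measureReal_pi_gaussianReal_sum_ge_le mean a hvc hε using 2
  rw [ha, one_mul]
  change _ = -ε ^ 2 / (2 * (2 * s ^ 2)⁻¹)
  field_simp

lemma pi_gaussianReal_zero_sum_mul_ge_le {ι : Type*} [Fintype ι] {x : ι → ℝ}
    (hx : ∑ j, x j ^ 2 = 1) {v : ℝ≥0} {s : ℝ} (hs : 0 < s) (hv : 2 * v * s ^ 2 ≤ 1) {θ : ℝ}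
    (hθ : 0 ≤ θ) :
    Measure.pi (fun _ : ι ↦ gaussianReal 0 v) {w | θ ≤ ∑ j, w j * x j}
      ≤ ENNReal.ofReal (exp (-(s * θ) ^ 2)) := by
  have h := measureReal_pi_gaussianReal_sum_ge_le_exp_neg_sq (fun _ ↦ 0) x hx hs hv hθ
  simp only [sub_zero, mul_comm (x _)] at h
  rw [← ofReal_measureReal]
  exact ENNReal.ofReal_le_ofReal h

lemma pi_gaussianReal_sum_mul_le_le {ι : Type*} [Fintype ι] {x : ι → ℝ}
    (hx : ∑ j, x j ^ 2 = 1) {v : ℝ≥0} {s : ℝ} (hs : 0 < s) (hv : 2 * v * s ^ 2 ≤ 1) {θ : ℝ}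
    (hθ : θ ≤ 1) :
    Measure.pi (fun j ↦ gaussianReal (x j) v) {w | ∑ j, w j * x j ≤ θ}
      ≤ ENNReal.ofReal (exp (-(s * (1 - θ)) ^ 2)) := by
  have h := measureReal_pi_gaussianReal_sum_ge_le_exp_neg_sq x (fun j ↦ -x j)
    (by simpa only [neg_sq] using hx) hs hv (sub_nonneg.2 hθ)
  have hsub : {w : ι → ℝ | ∑ j, w j * x j ≤ θ} ⊆ {w | 1 - θ ≤ ∑ j, -x j * (w j - x j)} := by
    intro w hw
    have hsum : ∑ j, -x j * (w j - x j) = 1 - ∑ j, w j * x j := by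
      simp only [neg_mul, mul_sub, Finset.sum_neg_distrib, Finset.sum_sub_distrib, ← sq, hx,
        mul_comm (x _)]
      ring
    simp only [Set.mem_ofPred_eq, hsum] at hw ⊢
    linarith
  calc _ ≤ _ := measure_mono hsub
    _ = _ := (ofReal_measureReal (measure_ne_top _ _)).symm
    _ ≤ _ := ENNReal.ofReal_le_ofReal h

lemma pi_compl_setOf_forall_lt_le {ι E : Type*} [Fintype ι] [DecidableEq ι]
    [MeasurableSpace E] (ν : ι → Measure E) [∀ i, IsProbabilityMeasure (ν i)] {f : E → ℝ}
    (hf : Measurable f) (β : ι) (θ : ℝ) :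
    Measure.pi ν {z | ∀ i, i ≠ β → f (z i) < f (z β)}ᶜ
      ≤ ν β {w | f w ≤ θ} + ∑ i ∈ Finset.univ.erase β, ν i {w | θ ≤ f w} := by
  have hsub : {z | ∀ i, i ≠ β → f (z i) < f (z β)}ᶜ ⊆ Function.eval β ⁻¹' {w | f w ≤ θ} ∪
      ⋃ i ∈ Finset.univ.erase β, Function.eval i ⁻¹' {w | θ ≤ f w} := by
    intro z hz
    simp only [Set.mem_compl_iff, Set.mem_ofPred_eq, not_forall, not_lt] at hz
    obtain ⟨i, hiβ, hle⟩ := hz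
    rcases le_or_gt (f (z β)) θ with hβ | hβ
    · exact Or.inl hβ
    · exact Or.inr (Set.mem_biUnion (Finset.mem_erase.2 ⟨hiβ, Finset.mem_univ i⟩)
        (show θ ≤ f (z i) by linarith))
  have hpre : ∀ i (A : Set E), MeasurableSet A → Measure.pi ν (Function.eval i ⁻¹' A) = ν i A :=
    fun i _ hA ↦ (measurePreserving_eval ν i).measure_preimage hA.nullMeasurableSet
  calc _ ≤ _ := measure_mono hsub
    _ ≤ _ := measure_union_le _ _
    _ ≤ _ := add_le_add le_rfl (measure_biUnion_finset_le _ _)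
    _ = _ := by
      rw [hpre _ _ (measurableSet_le hf measurable_const)]
      congr 1
      exact Finset.sum_congr rfl fun i _ ↦ hpre _ _ (measurableSet_le measurable_const hf)

lemma ofReal_one_sub_le_pi_setOf_forall_lt {ι E : Type*} [Fintype ι] [DecidableEq ι]
    [MeasurableSpace E] (ν : ι → Measure E) [∀ i, IsProbabilityMeasure (ν i)] {f : E → ℝ}
    (hf : Measurable f) (β : ι) {θ p q : ℝ} (hp : 0 ≤ p) (hq : 0 ≤ q)
    (hβ : ν β {w | f w ≤ θ} ≤ ENNReal.ofReal p)
    (hne : ∀ i, i ≠ β → ν i {w | θ ≤ f w} ≤ ENNReal.ofReal q) :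
    ENNReal.ofReal (1 - (p + Fintype.card ι * q))
      ≤ Measure.pi ν {z | ∀ i, i ≠ β → f (z i) < f (z β)} := by
  set G := {z : ι → E | ∀ i, i ≠ β → f (z i) < f (z β)}
  have hcompl : Measure.pi ν Gᶜ ≤ ENNReal.ofReal (p + Fintype.card ι * q) := calc
    _ ≤ _ := pi_compl_setOf_forall_lt_le ν hf β θ
    _ ≤ ENNReal.ofReal p + (Finset.univ.erase β).card • ENNReal.ofReal q :=
      add_le_add hβ (Finset.sum_le_card_nsmul _ _ _ fun i hi ↦ hne i (Finset.ne_of_mem_erase hi))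
    _ ≤ ENNReal.ofReal p + Fintype.card ι • ENNReal.ofReal q := by
      gcongr
      exact Finset.card_le_univ _
    _ = _ := by
      rw [nsmul_eq_mul, ← ENNReal.ofReal_natCast, ← ENNReal.ofReal_mul (by positivity),
        ← ENNReal.ofReal_add hp (by positivity)]
  calc ENNReal.ofReal (1 - (p + Fintype.card ι * q))
      ≤ 1 - ENNReal.ofReal (p + Fintype.card ι * q) := by
        rw [ENNReal.ofReal_sub _ (by positivity), ENNReal.ofReal_one]
    _ ≤ Measure.pi ν G := by
        rw [tsub_le_iff_right]
        calc (1 : ℝ≥0∞) = Measure.pi ν Set.univ := measure_univ.symm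
          _ ≤ _ := measure_univ_le_add_compl G
          _ ≤ _ := add_le_add le_rfl hcompl

lemma two_mul_toNNReal_mul_sq_le_one {v V s : ℝ} (hvV : v ≤ V) (hV : 2 * V * s ^ 2 ≤ 1) :
    2 * (v.toNNReal : ℝ) * s ^ 2 ≤ 1 := by
  rcases le_total v 0 with hv | hv
  · simp [Real.toNNReal_of_nonpos hv]
  · calc 2 * (v.toNNReal : ℝ) * s ^ 2 = 2 * v * s ^ 2 := by rw [Real.coe_toNNReal _ hv]
      _ ≤ 2 * V * s ^ 2 := by gcongr
      _ ≤ 1 := hV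

lemma exp_neg_sq_sqrt_log_add_half_le {m t : ℝ} (hm : 1 ≤ m) (ht : 0 ≤ t) :
    exp (-(√(log m) + t / 2) ^ 2) ≤ exp (-t ^ 2 / 4) / m := by
  have hL2 : √(log m) ^ 2 = log m := sq_sqrt (log_nonneg hm)
  rw [show exp (-t ^ 2 / 4) / m = exp (-t ^ 2 / 4 - log m) by
    rw [exp_sub, exp_log (by linarith)]]
  gcongr
  nlinarith [mul_nonneg (sqrt_nonneg (log m)) ht]

theorem stmt9_general (d m B : ℕ) (β : Fin m) (σ t : ℝ)
    (ht : 0 < t) (x : Fin d → ℝ) (hx : ∑ j, (x j) ^ 2 = 1)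
    (hd : 2 * σ ^ 2 * B * (Real.sqrt (Real.log m) + t) ^ 2 ≤ d)
    (μ : Measure (Fin m → Fin d → ℝ))
    (hμ : μ = Measure.pi (fun i => Measure.pi (fun jj =>
      gaussianReal (if i = β then x jj else 0)
        (if i = β then Real.toNNReal (σ ^ 2 * ((B : ℝ) - 1) / d)
          else Real.toNNReal (σ ^ 2 * B / d))))) :
    ENNReal.ofReal (1 - 3 * Real.exp (-t ^ 2 / 4)) ≤
      μ {z | ∀ i, i ≠ β → (∑ j, z i j * x j) < ∑ j, z β j * x j} := by
  subst hμ
  have hm : (1 : ℝ) ≤ m := by exact_mod_cast β.pos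
  have hd0 : (0 : ℝ) < d := by exact_mod_cast Nat.pos_of_ne_zero (by rintro rfl; simp at hx)
  set s := √(log m) + t
  have hs : 0 < s := by positivity
  have hvar : 2 * (σ ^ 2 * B / d) * s ^ 2 ≤ 1 := by
    rw [show 2 * (σ ^ 2 * B / d) * s ^ 2 = 2 * σ ^ 2 * B * s ^ 2 / d by ring, div_le_one hd0]
    exact hd
  have hfar_var := two_mul_toNNReal_mul_sq_le_one le_rfl hvar
  have hnear_var := two_mul_toNNReal_mul_sq_le_one (v := σ ^ 2 * (B - 1) / d)
    (by gcongr; linarith) hvar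
  set θ := (√(log m) + t / 2) / s
  have hsθ : s * θ = √(log m) + t / 2 := mul_div_cancel₀ _ hs.ne'
  have hs1θ : s * (1 - θ) = t / 2 := by rw [mul_sub, hsθ]; ring
  refine le_trans (ENNReal.ofReal_le_ofReal ?_) (ofReal_one_sub_le_pi_setOf_forall_lt _
    (f := fun w : Fin d → ℝ ↦ ∑ j, w j * x j) (by fun_prop) β (θ := θ)
    (p := exp (-t ^ 2 / 4)) (q := exp (-t ^ 2 / 4) / m) (by positivity) (by positivity) ?_
    fun i hi ↦ ?_)
  · rw [Fintype.card_fin, mul_div_cancel₀ _ (by positivity)]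
    linarith [exp_pos (-t ^ 2 / 4)]
  · simp only [↓reduceIte]
    convert pi_gaussianReal_sum_mul_le_le hx hs hnear_var (θ := θ)
      (div_le_one_of_le₀ (by linarith) hs.le) using 4
    rw [hs1θ]
    ring
  · simp only [hi, ↓reduceIte]
    exact (pi_gaussianReal_zero_sum_mul_ge_le hx hs hfar_var (by positivity)).trans
      (ENNReal.ofReal_le_ofReal (hsθ ▸ exp_neg_sq_sqrt_log_add_half_le hm ht.le))

/-- block detection under the random context model. -/
theorem stmt9 (d m B : ℕ) (β : Fin m) (σ t : ℝ) (hσ : 0 < σ) (hB : 1 ≤ B)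
    (ht : 0 < t) (x : Fin d → ℝ) (hx : ∑ j, (x j) ^ 2 = 1)
    (hd : 2 * σ ^ 2 * B * (Real.sqrt (Real.log m) + t) ^ 2 ≤ d)
    (μ : Measure (Fin m → Fin d → ℝ))
    (hμ : μ = Measure.pi (fun i => Measure.pi (fun jj =>
      gaussianReal (if i = β then x jj else 0)
        (if i = β then Real.toNNReal (σ ^ 2 * ((B : ℝ) - 1) / d)
          else Real.toNNReal (σ ^ 2 * B / d))))) :
    ENNReal.ofReal (1 - 3 * Real.exp (-t ^ 2 / 4)) ≤
      μ {z | ∀ i, i ≠ β → (∑ j, z i j * x j) < ∑ j, z β j * x j} :=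
  stmt9_general d m B β σ t ht x hx hd μ hμ
end

section
/- Let s ∈ ℝ^{L'} be a probability vector with s_i = s_{L'−1} = s_q at two designated positions, s_j ≤ Γ s_q for all other j, and suppose |2s_q − 1| ≤ δ₁. Let z_j ∈ ℝ^d with ‖z_j‖ ≤ M for all j, ‖z_i − 2v‖ ≤ δ₂ and ‖z_{L'−1}‖ ≤ δ₃ where v is a unit vector. Then ‖Σ_j s_j z_j − v‖₂ ≤ (1 − 2s_q)M + s_q(δ₂ + δ₃) + δ₁ ≤ L'Γ·M/(2) + (δ₂ + δ₃)/2 + δ₁ (using s_q ≤ 1/2 and 1 − 2s_q ≤ (L'−2)Γ s_q ≤ (L'−2)Γ/2). -/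
/-- core attention-output estimate for length generalization. -/
theorem stmt18 (L' d : ℕ) (hL' : 3 ≤ L') (s : Fin L' → ℝ)
    (i : Fin L') (hi : i ≠ ⟨L' - 1, by omega⟩)
    (sq Γ δ₁ δ₂ δ₃ M : ℝ)
    (hnn : ∀ j, 0 ≤ s j) (hsum : ∑ j, s j = 1)
    (hsi : s i = sq) (hslast : s ⟨L' - 1, by omega⟩ = sq)
    (hother : ∀ j : Fin L', j ≠ i → j ≠ ⟨L' - 1, by omega⟩ → s j ≤ Γ * sq)
    (hΓ : 0 ≤ Γ) (hM : 0 ≤ M)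
    (hδ₁ : |2 * sq - 1| ≤ δ₁)
    (z : Fin L' → EuclideanSpace ℝ (Fin d))
    (hz : ∀ j, ‖z j‖ ≤ M)
    (v : EuclideanSpace ℝ (Fin d)) (hv : ‖v‖ = 1)
    (hzi : ‖z i - (2 : ℝ) • v‖ ≤ δ₂)
    (hzlast : ‖z ⟨L' - 1, by omega⟩‖ ≤ δ₃) :
    ‖(∑ j, s j • z j) - v‖ ≤ (1 - 2 * sq) * M + sq * (δ₂ + δ₃) + δ₁ ∧
    ‖(∑ j, s j • z j) - v‖ ≤ (L' : ℝ) * Γ * M / 2 + (δ₂ + δ₃) / 2 + δ₁ := by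
  set q : Fin L' := ⟨L' - 1, by omega⟩ with hq
  have hqmem : q ∈ Finset.univ.erase i := Finset.mem_erase.mpr ⟨Ne.symm hi, Finset.mem_univ q⟩
  set T := (Finset.univ.erase i).erase q with hT
  have hsplit : ∀ {α : Type} [inst : AddCommMonoid α] (f : Fin L' → α),
      ∑ j, f j = f i + (f q + ∑ j ∈ T, f j) := by
    intro α inst f
    rw [← Finset.add_sum_erase _ f (Finset.mem_univ i), ← Finset.add_sum_erase _ f hqmem]
  have hsq0 : 0 ≤ sq := hsi ▸ hnn i
  have hTsum : ∑ j ∈ T, s j = 1 - 2 * sq := by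
    have := hsplit s
    rw [hsum, hsi, hslast] at this
    linarith
  have hTnn : 0 ≤ ∑ j ∈ T, s j := Finset.sum_nonneg fun j _ => hnn j
  have hsqhalf : sq ≤ 1 / 2 := by rw [hTsum] at hTnn; linarith
  have hδ₂0 : 0 ≤ δ₂ := le_trans (norm_nonneg _) hzi
  have hδ₃0 : 0 ≤ δ₃ := le_trans (norm_nonneg _) hzlast
  have hcard : T.card = L' - 2 := by
    rw [hT, Finset.card_erase_of_mem hqmem, Finset.card_erase_of_mem (Finset.mem_univ i),
      Finset.card_univ, Fintype.card_fin]
    omega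
  have hTbound : ∑ j ∈ T, s j ≤ (L' - 2 : ℝ) * (Γ * sq) := by
    calc ∑ j ∈ T, s j ≤ ∑ _j ∈ T, Γ * sq := by
          apply Finset.sum_le_sum
          intro j hj
          rw [hT, Finset.mem_erase, Finset.mem_erase] at hj
          exact hother j hj.2.1 hj.1
      _ = (T.card : ℝ) * (Γ * sq) := by rw [Finset.sum_const, nsmul_eq_mul]
      _ = (L' - 2 : ℝ) * (Γ * sq) := by
          rw [hcard]; congr 1
          have : 2 ≤ L' := by omega
          push_cast [Nat.cast_sub this]; ring
  have hkey : (∑ j, s j • z j) - v =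
      sq • (z i - (2 : ℝ) • v) + sq • z q + (2 * sq - 1) • v + ∑ j ∈ T, s j • z j := by
    rw [hsplit (fun j => s j • z j), hsi, hslast]
    module
  have hnorm : ‖(∑ j, s j • z j) - v‖ ≤ (1 - 2 * sq) * M + sq * (δ₂ + δ₃) + δ₁ := by
    rw [hkey]
    have h1 : ‖sq • (z i - (2 : ℝ) • v)‖ ≤ sq * δ₂ := by
      rw [norm_smul, Real.norm_eq_abs, abs_of_nonneg hsq0]
      exact mul_le_mul_of_nonneg_left hzi hsq0
    have h2 : ‖sq • z q‖ ≤ sq * δ₃ := by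
      rw [norm_smul, Real.norm_eq_abs, abs_of_nonneg hsq0]
      exact mul_le_mul_of_nonneg_left hzlast hsq0
    have h3 : ‖(2 * sq - 1) • v‖ ≤ δ₁ := by
      rw [norm_smul, Real.norm_eq_abs, hv, mul_one]; exact hδ₁
    have h4 : ‖∑ j ∈ T, s j • z j‖ ≤ (1 - 2 * sq) * M := by
      calc ‖∑ j ∈ T, s j • z j‖ ≤ ∑ j ∈ T, ‖s j • z j‖ := norm_sum_le _ _
        _ ≤ ∑ j ∈ T, s j * M := by
            apply Finset.sum_le_sum
            intro j _
            rw [norm_smul, Real.norm_eq_abs, abs_of_nonneg (hnn j)]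
            exact mul_le_mul_of_nonneg_left (hz j) (hnn j)
        _ = (1 - 2 * sq) * M := by rw [← Finset.sum_mul, hTsum]
    calc ‖sq • (z i - (2 : ℝ) • v) + sq • z q + (2 * sq - 1) • v + ∑ j ∈ T, s j • z j‖
        ≤ ‖sq • (z i - (2 : ℝ) • v)‖ + ‖sq • z q‖ + ‖(2 * sq - 1) • v‖ + ‖∑ j ∈ T, s j • z j‖ := by
          exact le_trans (norm_add_le _ _) (by
            have := norm_add₃_le (E := EuclideanSpace ℝ (Fin d))
              (a := sq • (z i - (2 : ℝ) • v)) (b := sq • z q) (c := (2 * sq - 1) • v)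
            linarith)
      _ ≤ sq * δ₂ + sq * δ₃ + δ₁ + (1 - 2 * sq) * M := by linarith
      _ = (1 - 2 * sq) * M + sq * (δ₂ + δ₃) + δ₁ := by ring
  refine ⟨hnorm, hnorm.trans ?_⟩
  have h1 : 1 - 2 * sq ≤ (L' - 2 : ℝ) * (Γ * sq) := hTsum ▸ hTbound
  have hL'2 : (2 : ℝ) ≤ (L' : ℝ) := by exact_mod_cast (by omega : 2 ≤ L')
  have h2 : (1 - 2 * sq) * M ≤ (L' : ℝ) * Γ * M / 2 := by
    have : (L' - 2 : ℝ) * (Γ * sq) ≤ (L' : ℝ) * Γ * (1 / 2) := by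
      nlinarith [mul_nonneg hΓ hsq0,
        mul_le_mul_of_nonneg_left hsqhalf (mul_nonneg (by linarith : (0:ℝ) ≤ (L':ℝ)) hΓ)]
    nlinarith [mul_le_mul_of_nonneg_right this hM]
  have h3 : sq * (δ₂ + δ₃) ≤ (δ₂ + δ₃) / 2 := by nlinarith
  linarith
end
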